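/- Let u₃, u₄ : [0,1] → ℝ be continuous with u₃ not causing degeneracy, and suppose z₃, z₄ : [0,1] → ℝ are twice (resp. three times) continuously differentiable with -z₃' + u₄' z₃ + u₃ z₄' = 0, -z₃ + z₄'' = 0, z₃(0) = 0, z₄(0) = z₄(1) = 0. Let φ₁, φ₂ be a fundamental system of solutions of the second-order ODE -y'' + u₄' y' + u₃ y = 0. If the 2×2 determinant det [[φ₁'(0), φ₂'(0)], [∫₀¹ φ₁ dξ, ∫₀¹ φ₂ dξ]] ≠ 0, then z₃ ≡ 0 and z₄ ≡ 0. -/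

import Mathlib

/-!
Since `z₃ = z₄''`, the first equation says that `z₄'` solves `-y'' + u₄' y' + u₃ y = 0`, so
`z₄' = K₁ φ₁ + K₂ φ₂` on `[0, 1]`. Differentiating and evaluating at `0` turns `z₃(0) = 0` into
`K₁ φ₁'(0) + K₂ φ₂'(0) = 0`, and integrating over `[0, 1]` turns `z₄(0) = z₄(1) = 0` into
`K₁ ∫ φ₁ + K₂ ∫ φ₂ = 0`. The determinant of this system is nonzero, so `K₁ = K₂ = 0`; hence
`z₄' = 0` and `z₃ = z₄'' = 0` on `[0, 1]`, and `z₄ = z₄(0) = 0`.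
-/

open Set intervalIntegral

theorem eq_zero_and_eq_zero_of_det_ne_zero {R : Type*} [CommRing R] [NoZeroDivisors R]
    {a b c d x y : R} (hdet : a * d - b * c ≠ 0)
    (h₁ : x * a + y * b = 0) (h₂ : x * c + y * d = 0) : x = 0 ∧ y = 0 := by
  have hx : x * (a * d - b * c) = 0 := by linear_combination d * h₁ - b * h₂
  have hy : y * (a * d - b * c) = 0 := by linear_combination a * h₂ - c * h₁
  exact ⟨(mul_eq_zero.mp hx).resolve_right hdet, (mul_eq_zero.mp hy).resolve_right hdet⟩

theorem eqOn_deriv_Icc {f g : ℝ → ℝ} {a b : ℝ} (hab : a < b)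
    (hf : Continuous (deriv f)) (hg : Continuous (deriv g)) (h : EqOn f g (Icc a b)) :
    EqOn (deriv f) (deriv g) (Icc a b) := by
  have hIoo := (h.mono Ioo_subset_Icc_self).deriv isOpen_Ioo
  simpa only [closure_Ioo hab.ne] using hIoo.closure hf hg

theorem sub_eq_integral_of_eqOn_deriv {f g : ℝ → ℝ} {a b : ℝ} (hf : Differentiable ℝ f)
    (hg : Continuous g) (h : EqOn (deriv f) g (Icc a b)) :
    ∀ x ∈ Icc a b, f x - f a = ∫ t in a..x, g t := by
  intro x hx
  refine (integral_eq_sub_of_hasDerivAt (fun t ht => ?_) (hg.intervalIntegrable a x)).symm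
  rw [uIcc_of_le hx.1] at ht
  exact h (Icc_subset_Icc_right hx.2 ht) ▸ (hf t).hasDerivAt

theorem deriv_solves_of_system {u₃ u₄ z₃ z₄ : ℝ → ℝ} {a b : ℝ} (hab : a < b)
    (hz₃ : ContDiff ℝ 1 z₃) (hz₄ : ContDiff ℝ 3 z₄)
    (heq1 : ∀ x ∈ Icc a b, -deriv z₃ x + deriv u₄ x * z₃ x + u₃ x * deriv z₄ x = 0)
    (heq2 : ∀ x ∈ Icc a b, -z₃ x + deriv (deriv z₄) x = 0) :
    ∀ x ∈ Icc a b, -deriv (deriv (deriv z₄)) x + deriv u₄ x * deriv (deriv z₄) x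
      + u₃ x * deriv z₄ x = 0 := by
  have hz₃eq : EqOn (deriv (deriv z₄)) z₃ (Icc a b) := fun x hx => by
    linarith [heq2 x hx]
  have hddd : EqOn (deriv (deriv (deriv z₄))) (deriv z₃) (Icc a b) :=
    eqOn_deriv_Icc hab hz₄.deriv'.deriv'.continuous_deriv_one
      hz₃.continuous_deriv_one hz₃eq
  intro x hx
  rw [hddd hx, hz₃eq hx]
  exact heq1 x hx

theorem stmt_3_general (u₃ u₄ z₃ z₄ φ₁ φ₂ : ℝ → ℝ)
    (hz₃ : ContDiff ℝ 2 z₃) (hz₄ : ContDiff ℝ 3 z₄)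
    (heq1 : ∀ x ∈ Icc (0:ℝ) 1,
      -deriv z₃ x + deriv u₄ x * z₃ x + u₃ x * deriv z₄ x = 0)
    (heq2 : ∀ x ∈ Icc (0:ℝ) 1, -z₃ x + deriv (deriv z₄) x = 0)
    (hbc₃ : z₃ 0 = 0) (hbc₄0 : z₄ 0 = 0) (hbc₄1 : z₄ 1 = 0)
    (hφ₁ : ContDiff ℝ 2 φ₁) (hφ₂ : ContDiff ℝ 2 φ₂)
    (hfund : ∀ y : ℝ → ℝ, ContDiff ℝ 2 y →
      (∀ x ∈ Icc (0:ℝ) 1,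
        -deriv (deriv y) x + deriv u₄ x * deriv y x + u₃ x * y x = 0) →
      ∃ K₁ K₂ : ℝ, ∀ x ∈ Icc (0:ℝ) 1, y x = K₁ * φ₁ x + K₂ * φ₂ x)
    (hdet : deriv φ₁ 0 * (∫ ξ in (0:ℝ)..1, φ₂ ξ)
        - deriv φ₂ 0 * (∫ ξ in (0:ℝ)..1, φ₁ ξ) ≠ 0) :
    ∀ x ∈ Icc (0:ℝ) 1, z₃ x = 0 ∧ z₄ x = 0 := by
  obtain ⟨K₁, K₂, hK⟩ := hfund (deriv z₄) hz₄.deriv'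
    (deriv_solves_of_system zero_lt_one (hz₃.of_le one_le_two) hz₄ heq1 heq2)
  set ψ := fun x => K₁ * φ₁ x + K₂ * φ₂ x
  have hψ : ContDiff ℝ 2 ψ := (contDiff_const.mul hφ₁).add (contDiff_const.mul hφ₂)
  have hz₄ψ : ∀ x ∈ Icc (0:ℝ) 1, z₄ x = ∫ t in (0:ℝ)..x, ψ t := fun x hx => by
    simpa [hbc₄0] using sub_eq_integral_of_eqOn_deriv (hz₄.differentiable (by norm_num))
      hψ.continuous hK x hx
  have hz₃ψ : ∀ x ∈ Icc (0:ℝ) 1, z₃ x = deriv ψ x := fun x hx => by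
    rw [← eqOn_deriv_Icc zero_lt_one (hz₄.deriv'.continuous_deriv one_le_two)
      (hψ.continuous_deriv one_le_two) hK hx]
    linarith [heq2 x hx]
  have hdψ : ∀ x, deriv ψ x = K₁ * deriv φ₁ x + K₂ * deriv φ₂ x := fun x =>
    (((hφ₁.differentiable two_ne_zero x).hasDerivAt.const_mul K₁).add
      ((hφ₂.differentiable two_ne_zero x).hasDerivAt.const_mul K₂)).deriv
  have hintψ :
      ∫ t in (0:ℝ)..1, ψ t = K₁ * (∫ ξ in (0:ℝ)..1, φ₁ ξ) + K₂ * ∫ ξ in (0:ℝ)..1, φ₂ ξ := by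
    rw [integral_add ((hφ₁.continuous.const_mul K₁).intervalIntegrable 0 1)
      ((hφ₂.continuous.const_mul K₂).intervalIntegrable 0 1), integral_const_mul,
      integral_const_mul]
  obtain ⟨rfl, rfl⟩ := eq_zero_and_eq_zero_of_det_ne_zero hdet
    (by rw [← hdψ, ← hz₃ψ 0 ⟨le_rfl, zero_le_one⟩, hbc₃]) (by rw [← hintψ, ← hz₄ψ 1 ⟨zero_le_one, le_rfl⟩, hbc₄1])
  intro x hx
  simp [hz₃ψ x hx, hz₄ψ x hx, ψ]

/-- Lemma 3.2 / Lemma `lemma1`: if `z₃, z₄` solve the homogeneous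
kernel system with homogeneous boundary values and the fundamental-solution
determinant is nonzero, then `z₃ ≡ 0` and `z₄ ≡ 0` on `[0,1]`. -/
theorem stmt_3 (u₃ u₄ z₃ z₄ φ₁ φ₂ : ℝ → ℝ)
    (hu₃ : Continuous u₃) (hu₄ : ContDiff ℝ 1 u₄)
    (hz₃ : ContDiff ℝ 2 z₃) (hz₄ : ContDiff ℝ 3 z₄)
    (heq1 : ∀ x ∈ Icc (0:ℝ) 1,
      -deriv z₃ x + deriv u₄ x * z₃ x + u₃ x * deriv z₄ x = 0)
    (heq2 : ∀ x ∈ Icc (0:ℝ) 1, -z₃ x + deriv (deriv z₄) x = 0)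
    (hbc₃ : z₃ 0 = 0) (hbc₄0 : z₄ 0 = 0) (hbc₄1 : z₄ 1 = 0)
    (hφ₁ : ContDiff ℝ 2 φ₁) (hφ₂ : ContDiff ℝ 2 φ₂)
    (hφ₁sol : ∀ x ∈ Icc (0:ℝ) 1,
      -deriv (deriv φ₁) x + deriv u₄ x * deriv φ₁ x + u₃ x * φ₁ x = 0)
    (hφ₂sol : ∀ x ∈ Icc (0:ℝ) 1,
      -deriv (deriv φ₂) x + deriv u₄ x * deriv φ₂ x + u₃ x * φ₂ x = 0)
    (hfund : ∀ y : ℝ → ℝ, ContDiff ℝ 2 y →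
      (∀ x ∈ Icc (0:ℝ) 1,
        -deriv (deriv y) x + deriv u₄ x * deriv y x + u₃ x * y x = 0) →
      ∃ K₁ K₂ : ℝ, ∀ x ∈ Icc (0:ℝ) 1, y x = K₁ * φ₁ x + K₂ * φ₂ x)
    (hdet : deriv φ₁ 0 * (∫ ξ in (0:ℝ)..1, φ₂ ξ)
        - deriv φ₂ 0 * (∫ ξ in (0:ℝ)..1, φ₁ ξ) ≠ 0) :
    ∀ x ∈ Icc (0:ℝ) 1, z₃ x = 0 ∧ z₄ x = 0 :=
  stmt_3_general u₃ u₄ z₃ z₄ φ₁ φ₂ hz₃ hz₄ heq1 heq2 hbc₃ hbc₄0 hbc₄1 hφ₁ hφ₂ hfund hdet
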